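/- Cohomological k-consistency is transitive: for finite relational structures A, B, C over a common signature, A →ᶻ_k B and B →ᶻ_k C imply A →ᶻ_k C. -/

import Mathlib

open scoped Classical

/-- A (relational) signature: a type of relation symbols with arities. -/
structure Sig where
  symb : Type
  ar : symb → ℕ

/-- A relational structure over a signature `σ`. -/
structure Str (σ : Sig) where
  carrier : Type
  rel : ∀ r : σ.symb, (Fin (σ.ar r) → carrier) → Prop

/-- A (total) homomorphism of relational structures. -/
def IsHom {σ : Sig} (A B : Str σ) (h : A.carrier → B.carrier) : Prop :=
  ∀ r t, A.rel r t → B.rel r (fun i => h (t i))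

/-- An isomorphism of relational structures: a bijection preserving and reflecting relations. -/
def IsIso {σ : Sig} (A B : Str σ) (h : A.carrier → B.carrier) : Prop :=
  Function.Bijective h ∧ ∀ r t, A.rel r t ↔ B.rel r (fun i => h (t i))

/-- Domain of a partial function (coded as an `Option`-valued function). -/
def pdom {α β : Type*} (s : α → Option β) : Set α := {a | s a ≠ none}

/-- Image of a partial function. -/
def pim {α β : Type*} (s : α → Option β) : Set β := {b | ∃ a, s a = some b}

/-- Restriction of a partial function to a set. -/
noncomputable def restrictP {α β : Type*} (s : α → Option β) (U : Set α) : α → Option β :=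
  fun a => if a ∈ U then s a else none

/-- A total function viewed as a partial function. -/
def total {α β : Type*} (h : α → β) : α → Option β := fun a => some (h a)

/-- A partial homomorphism: preserves related tuples lying in its domain. -/
def IsPHom {σ : Sig} (A B : Str σ) (s : A.carrier → Option B.carrier) : Prop :=
  ∀ r (t : Fin (σ.ar r) → A.carrier) (t' : Fin (σ.ar r) → B.carrier),
    A.rel r t → (∀ i, s (t i) = some (t' i)) → B.rel r t'

/-- A partial isomorphism: an injective partial homomorphism reflecting relations. -/
def IsPIso {σ : Sig} (A B : Str σ) (s : A.carrier → Option B.carrier) : Prop :=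
  IsPHom A B s ∧
  (∀ a a' b, s a = some b → s a' = some b → a = a') ∧
  (∀ r (t : Fin (σ.ar r) → A.carrier) (t' : Fin (σ.ar r) → B.carrier),
    B.rel r t' → (∀ i, s (t i) = some (t' i)) → A.rel r t)

/-- `Hom_k(A,B)`: partial homomorphisms with domain of size at most `k`. -/
def Homk {σ : Sig} (k : ℕ) (A B : Str σ) : Set (A.carrier → Option B.carrier) :=
  {s | IsPHom A B s ∧ (pdom s).Finite ∧ (pdom s).ncard ≤ k}

/-- `Isom_k(A,B)`: partial isomorphisms with domain of size at most `k`. -/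
def Isomk {σ : Sig} (k : ℕ) (A B : Str σ) : Set (A.carrier → Option B.carrier) :=
  {s | IsPIso A B s ∧ (pdom s).Finite ∧ (pdom s).ncard ≤ k}

/-- `s ∪ {(a,b)}`: extend a partial function by one value. -/
noncomputable def extend {α β : Type*} (s : α → Option β) (a : α) (b : β) : α → Option β :=
  fun x => if x = a then some b else s x

/-- Downward closure: closed under restriction. -/
def DownClosed {α β : Type*} (S : Set (α → Option β)) : Prop :=
  ∀ s ∈ S, ∀ U, restrictP s U ∈ S

/-- `Forth S s`: for all `a` there is `b` with `s ∪ {(a,b)} ∈ S`. -/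
def Forth {α β : Type*} (S : Set (α → Option β)) (s : α → Option β) : Prop :=
  ∀ a, ∃ b, extend s a b ∈ S

/-- The forth property for all members with domain of size `< k`. -/
def HasForth {α β : Type*} (k : ℕ) (S : Set (α → Option β)) : Prop :=
  ∀ s ∈ S, (pdom s).ncard < k → Forth S s

/-- Bijective forth: there is a bijection `b` with `s ∪ {(a, b a)} ∈ S` for all `a`. -/
def BijForth {α β : Type*} (S : Set (α → Option β)) (s : α → Option β) : Prop :=
  ∃ b : α → β, Function.Bijective b ∧ ∀ a, extend s a (b a) ∈ S

/-- The bijective forth property for all members with domain of size `< k`. -/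
def HasBijForth {α β : Type*} (k : ℕ) (S : Set (α → Option β)) : Prop :=
  ∀ s ∈ S, (pdom s).ncard < k → BijForth S s

/-- Restriction of a formal ℤ-linear combination of partial functions, collecting like terms. -/
noncomputable def restrictZ {α β : Type*} (U : Set α) (r : (α → Option β) →₀ ℤ) :
    (α → Option β) →₀ ℤ :=
  Finsupp.mapDomain (fun s => restrictP s U) r

/-- A global ℤ-linear section of `S` over the contexts of size at most `k`. -/
def IsZSection {α β : Type*} (k : ℕ) (S : Set (α → Option β))
    (r : Set α → ((α → Option β) →₀ ℤ)) : Prop :=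
  (∀ U : Set α, U.Finite → U.ncard ≤ k → ∀ t ∈ (r U).support, t ∈ S ∧ pdom t = U) ∧
  (∀ U U' : Set α, U.Finite → U.ncard ≤ k → U'.Finite → U'.ncard ≤ k →
    restrictZ (U ∩ U') (r U) = restrictZ (U ∩ U') (r U'))

/-- `s` is ℤ-extendable in `S`: some global ℤ-linear section restricts to `s` at its domain. -/
def ZExt {α β : Type*} (k : ℕ) (S : Set (α → Option β)) (s : α → Option β) : Prop :=
  ∃ r, IsZSection k S r ∧ r (pdom s) = Finsupp.single s 1

/-- The set of restrictions of a total function `h` to subsets of size at most `k`. -/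
def Sres {α β : Type*} (h : α → β) (k : ℕ) : Set (α → Option β) :=
  {s | ∃ U : Set α, U.Finite ∧ U.ncard ≤ k ∧ s = restrictP (total h) U}

/-- `A →_k B`: k-consistency (existence of a nonempty downward-closed forth set). -/
def karrow {σ : Sig} (k : ℕ) (A B : Str σ) : Prop :=
  ∃ S : Set (A.carrier → Option B.carrier),
    S.Nonempty ∧ S ⊆ Homk k A B ∧ DownClosed S ∧ HasForth k S

/-- `A →ᶻ_k B`: cohomological k-consistency. -/
def cohomConsistent {σ : Sig} (k : ℕ) (A B : Str σ) : Prop :=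
  ∃ S : Set (A.carrier → Option B.carrier), S.Nonempty ∧ S ⊆ Homk k A B ∧
    DownClosed S ∧ HasForth k S ∧ ∀ s ∈ S, ZExt k S s

/-- Composition of partial functions. -/
def pcomp {α β γ : Type*} (s : β → Option γ) (t : α → Option β) : α → Option γ :=
  fun a => (t a).bind s

/-!
Compose the two witness sets: `S = {u ∘ s | s ∈ S₁, u ∈ S₂, pim s ⊆ pdom u}`. It inherits
downward closure from `S₁`; the forth property comes from extending `s` at the new point `a` and
then `u` at the new value `b`, since `|pim s| ≤ |pdom s| < k`. For ℤ-extendability, sections `r₁`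
through `s` and `r₂` through `u` compose to the section
`U ↦ ∑ₛ r₁(U)(s) · ∑ᵤ r₂(pim s)(u) · [u ∘ s]`; it is compatible because restriction commutes
with precomposition and `r₂` restricts from `pim s` to the image of any restriction of `s`.
-/

section PartialFunctions

variable {α β γ : Type*}

lemma pdom_restrictP (s : α → Option β) (U : Set α) : pdom (restrictP s U) = U ∩ pdom s := by
  ext a
  by_cases h : a ∈ U <;> simp [pdom, restrictP, h]

lemma restrictP_pdom (s : α → Option β) : restrictP s (pdom s) = s := by
  funext a
  by_cases h : s a = none <;> simp [restrictP, pdom, h]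

lemma pim_restrictP_subset (s : α → Option β) (U : Set α) : pim (restrictP s U) ⊆ pim s := by
  rintro b ⟨a, ha⟩
  by_cases h : a ∈ U <;> simp only [restrictP, h, if_true, if_false, reduceCtorEq] at ha
  exact ⟨a, ha⟩

lemma pdom_extend (s : α → Option β) (a : α) (b : β) :
    pdom (extend s a b) = insert a (pdom s) := by
  ext x
  by_cases h : x = a <;> simp [pdom, extend, h]

lemma pim_extend_subset (s : α → Option β) (a : α) (b : β) :
    pim (extend s a b) ⊆ insert b (pim s) := by
  rintro c ⟨x, hx⟩
  by_cases h : x = a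
  · simp_all [extend]
  · simp only [extend, h, if_false] at hx
    exact Set.mem_insert_of_mem _ ⟨x, hx⟩

lemma some_mem_image_pdom {s : α → Option β} {b : β} (hb : b ∈ pim s) :
    some b ∈ s '' pdom s := by
  obtain ⟨a, ha⟩ := hb
  exact ⟨a, by simp [pdom, ha], ha⟩

lemma Set.Finite.pim {s : α → Option β} (h : (pdom s).Finite) : (pim s).Finite :=
  ((h.image s).preimage (Option.some_injective β).injOn).subset
    fun _ hb => some_mem_image_pdom hb

lemma ncard_pim_le {s : α → Option β} (h : (pdom s).Finite) :
    (pim s).ncard ≤ (pdom s).ncard :=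
  (Set.ncard_le_ncard_of_injOn some (fun _ hb => some_mem_image_pdom hb)
    (Option.some_injective β).injOn (h.image s)).trans (Set.ncard_image_le h)

lemma pdom_pcomp_subset (u : β → Option γ) (s : α → Option β) :
    pdom (pcomp u s) ⊆ pdom s := by
  intro a ha hs
  simp [pdom, pcomp, hs] at ha

lemma pdom_pcomp {u : β → Option γ} {s : α → Option β} (h : pim s ⊆ pdom u) :
    pdom (pcomp u s) = pdom s := by
  refine (pdom_pcomp_subset u s).antisymm fun a ha => ?_
  obtain ⟨b, hb⟩ := Option.ne_none_iff_exists'.mp ha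
  simpa [pdom, pcomp, hb] using h ⟨a, hb⟩

lemma restrictP_pcomp (u : β → Option γ) (s : α → Option β) (U : Set α) :
    restrictP (pcomp u s) U = pcomp u (restrictP s U) := by
  funext a
  by_cases h : a ∈ U <;> simp [restrictP, pcomp, h]

lemma pcomp_restrictP_of_pim_subset (u : β → Option γ) {s : α → Option β} {V : Set β}
    (h : pim s ⊆ V) : pcomp (restrictP u V) s = pcomp u s := by
  funext a
  cases hs : s a with
  | none => simp [pcomp, hs]
  | some b => simp [pcomp, hs, restrictP, h ⟨a, hs⟩]

lemma pcomp_extend {u u' : β → Option γ} {s : α → Option β} {a : α} {b : β} {c : γ}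
    (hagree : ∀ b' ∈ pim s, u' b' = u b') (hb : u' b = some c) :
    pcomp u' (extend s a b) = extend (pcomp u s) a c := by
  funext x
  by_cases hx : x = a
  · simp [pcomp, extend, hx, hb]
  · cases hs : s x with
    | none => simp [pcomp, extend, hx, hs]
    | some b' => simp [pcomp, extend, hx, hs, hagree b' ⟨x, hs⟩]

end PartialFunctions

lemma IsPHom.pcomp {σ : Sig} {A B C : Str σ} {u : B.carrier → Option C.carrier}
    {s : A.carrier → Option B.carrier} (hu : IsPHom B C u) (hs : IsPHom A B s) :
    IsPHom A C (pcomp u s) := by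
  intro r tA tC hrel hmap
  have hmid : ∀ i, ∃ b, s (tA i) = some b ∧ u b = some (tC i) := fun i =>
    Option.bind_eq_some_iff.mp (hmap i)
  choose tB hs_tB hu_tB using hmid
  exact hu r tB tC (hs r tA tB hrel hs_tB) hu_tB

section Composition

variable {α β γ : Type*}

def compSet (S₁ : Set (α → Option β)) (S₂ : Set (β → Option γ)) : Set (α → Option γ) :=
  {t | ∃ s ∈ S₁, ∃ u ∈ S₂, pim s ⊆ pdom u ∧ t = pcomp u s}

variable {S₁ : Set (α → Option β)} {S₂ : Set (β → Option γ)}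

lemma compSet_nonempty (h₁ : S₁.Nonempty) (h₂ : S₂.Nonempty) (hd₁ : DownClosed S₁)
    (hd₂ : DownClosed S₂) : (compSet S₁ S₂).Nonempty := by
  obtain ⟨s, hs⟩ := h₁
  obtain ⟨u, hu⟩ := h₂
  refine ⟨_, restrictP s ∅, hd₁ s hs ∅, restrictP u ∅, hd₂ u hu ∅, ?_, rfl⟩
  rintro b ⟨a, ha⟩
  simp [restrictP] at ha

lemma compSet_subset_Homk {σ : Sig} {k : ℕ} {A B C : Str σ}
    {S₁ : Set (A.carrier → Option B.carrier)} {S₂ : Set (B.carrier → Option C.carrier)}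
    (h₁ : S₁ ⊆ Homk k A B) (h₂ : S₂ ⊆ Homk k B C) : compSet S₁ S₂ ⊆ Homk k A C := by
  rintro t ⟨s, hs, u, hu, -, rfl⟩
  obtain ⟨hs_hom, hs_fin, hs_card⟩ := h₁ hs
  have hsub := pdom_pcomp_subset u s
  exact ⟨(h₂ hu).1.pcomp hs_hom, hs_fin.subset hsub,
    (Set.ncard_le_ncard hsub hs_fin).trans hs_card⟩

lemma DownClosed.compSet (hd₁ : DownClosed S₁) : DownClosed (compSet S₁ S₂) := by
  rintro t ⟨s, hs, u, hu, him, rfl⟩ U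
  exact ⟨restrictP s U, hd₁ s hs U, u, hu, (pim_restrictP_subset s U).trans him,
    restrictP_pcomp u s U⟩

lemma exists_pcomp_of_mem_compSet (hd₂ : DownClosed S₂) {t : α → Option γ}
    (ht : t ∈ compSet S₁ S₂) : ∃ s ∈ S₁, ∃ u ∈ S₂,
      pdom s = pdom t ∧ pdom u = pim s ∧ t = pcomp u s := by
  obtain ⟨s, hs, u, hu, him, rfl⟩ := ht
  refine ⟨s, hs, restrictP u (pim s), hd₂ u hu _, (pdom_pcomp him).symm, ?_,
    (pcomp_restrictP_of_pim_subset u subset_rfl).symm⟩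
  rw [pdom_restrictP, Set.inter_eq_left.mpr him]

lemma HasForth.exists_extend_eq_on_pdom {k : ℕ} {S : Set (β → Option γ)} (hS : HasForth k S)
    {u : β → Option γ} (hu : u ∈ S) (hcard : (pdom u).ncard < k) (b : β) :
    ∃ c, extend u b c ∈ S ∧ ∀ b' ∈ pdom u, extend u b c b' = u b' := by
  by_cases hb : b ∈ pdom u
  · obtain ⟨c, hc⟩ := Option.ne_none_iff_exists'.mp hb
    have hext : extend u b c = u := by
      funext x
      by_cases hx : x = b <;> simp [extend, hx, hc]
    exact ⟨c, hext.symm ▸ hu, fun _ _ => by rw [hext]⟩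
  · obtain ⟨c, hc⟩ := hS u hu hcard b
    exact ⟨c, hc, fun b' hb' => if_neg fun h : b' = b => hb (h ▸ hb')⟩

lemma HasForth.compSet {k : ℕ} (hd₂ : DownClosed S₂)
    (hfin : ∀ s ∈ S₁, (pdom s).Finite) (hf₁ : HasForth k S₁) (hf₂ : HasForth k S₂) :
    HasForth k (compSet S₁ S₂) := by
  intro t ht hcard a
  obtain ⟨s, hs, u, hu, hs_dom, hu_dom, rfl⟩ := exists_pcomp_of_mem_compSet hd₂ ht
  rw [← hs_dom] at hcard
  obtain ⟨b, hb⟩ := hf₁ s hs hcard a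
  have hu_card : (pdom u).ncard < k := hu_dom ▸ (ncard_pim_le (hfin s hs)).trans_lt hcard
  obtain ⟨c, hc, hagree⟩ := hf₂.exists_extend_eq_on_pdom hu hu_card b
  refine ⟨c, extend s a b, hb, extend u b c, hc, ?_, ?_⟩
  · rw [pdom_extend, hu_dom]
    exact pim_extend_subset s a b
  · exact (pcomp_extend (fun b' hb' => hagree b' (hu_dom ▸ hb')) (by simp [extend])).symm

end Composition

section Sections

variable {α β γ : Type*} {k : ℕ}

lemma IsZSection.restrictZ_of_subset {S : Set (α → Option β)}
    {r : Set α → (α → Option β) →₀ ℤ} (hr : IsZSection k S r) {U V : Set α} (hU : U.Finite)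
    (hUk : U.ncard ≤ k) (hVU : V ⊆ U) : restrictZ V (r U) = r V := by
  have hV : V.Finite := hU.subset hVU
  have hVk : V.ncard ≤ k := (Set.ncard_le_ncard hVU hU).trans hUk
  have hcompat := hr.2 U V hU hUk hV hVk
  rw [Set.inter_eq_right.mpr hVU] at hcompat
  rw [hcompat, restrictZ]
  conv_rhs => rw [← Finsupp.mapDomain_id (v := r V)]
  refine Finsupp.mapDomain_congr fun t ht => ?_
  rw [← (hr.1 V hV hVk t ht).2, restrictP_pdom]
  rfl

noncomputable def compAlong (r₂ : Set β → (β → Option γ) →₀ ℤ) (s : α → Option β) :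
    (α → Option γ) →₀ ℤ :=
  Finsupp.mapDomain (fun u => pcomp u s) (r₂ (pim s))

noncomputable def compSection (r₁ : Set α → (α → Option β) →₀ ℤ)
    (r₂ : Set β → (β → Option γ) →₀ ℤ) (U : Set α) : (α → Option γ) →₀ ℤ :=
  Finsupp.linearCombination ℤ (compAlong r₂) (r₁ U)

variable {S₁ : Set (α → Option β)} {S₂ : Set (β → Option γ)}
  {r₁ : Set α → (α → Option β) →₀ ℤ} {r₂ : Set β → (β → Option γ) →₀ ℤ}

lemma restrictZ_compAlong (hr₂ : IsZSection k S₂ r₂) {s : α → Option β} (hfin : (pdom s).Finite)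
    (hcard : (pdom s).ncard ≤ k) (U : Set α) :
    restrictZ U (compAlong r₂ s) = compAlong r₂ (restrictP s U) := by
  calc restrictZ U (compAlong r₂ s)
      = Finsupp.mapDomain (fun u => pcomp u (restrictP s U)) (r₂ (pim s)) := by
        simp only [restrictZ, compAlong, ← Finsupp.mapDomain_comp, Function.comp_def,
          restrictP_pcomp]
    _ = Finsupp.mapDomain (fun u => pcomp u (restrictP s U))
          (restrictZ (pim (restrictP s U)) (r₂ (pim s))) := by
        rw [restrictZ, ← Finsupp.mapDomain_comp]
        exact Finsupp.mapDomain_congr fun u _ =>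
          (pcomp_restrictP_of_pim_subset u subset_rfl).symm
    _ = compAlong r₂ (restrictP s U) := by
        rw [hr₂.restrictZ_of_subset hfin.pim ((ncard_pim_le hfin).trans hcard)
          (pim_restrictP_subset s U)]
        rfl

lemma restrictZ_compSection (hr₁ : IsZSection k S₁ r₁) (hr₂ : IsZSection k S₂ r₂)
    {U : Set α} (hU : U.Finite) (hUk : U.ncard ≤ k) (W : Set α) :
    restrictZ W (compSection r₁ r₂ U) =
      Finsupp.linearCombination ℤ (compAlong r₂) (restrictZ W (r₁ U)) := by
  calc restrictZ W (compSection r₁ r₂ U)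
      = Finsupp.linearCombination ℤ (restrictZ W ∘ compAlong r₂) (r₁ U) :=
        Finsupp.apply_linearCombination ℤ (Finsupp.lmapDomain ℤ ℤ (restrictP · W)) _ _
    _ = Finsupp.linearCombination ℤ (compAlong r₂ ∘ (restrictP · W)) (r₁ U) := by
        simp only [Finsupp.linearCombination_apply]
        refine Finsupp.sum_congr fun s hs => ?_
        obtain ⟨-, hdom⟩ := hr₁.1 U hU hUk s hs
        rw [Function.comp_apply, restrictZ_compAlong hr₂ (hdom ▸ hU) (hdom ▸ hUk)]
        rfl
    _ = _ := (Finsupp.linearCombination_mapDomain ..).symm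

lemma IsZSection.compSection (hr₁ : IsZSection k S₁ r₁) (hr₂ : IsZSection k S₂ r₂) :
    IsZSection k (compSet S₁ S₂) (compSection r₁ r₂) := by
  refine ⟨fun U hU hUk t ht => ?_, fun U U' hU hUk hU' hU'k => ?_⟩
  · obtain ⟨s, hs, ht⟩ := Finset.mem_biUnion.mp (Finsupp.support_sum ht)
    obtain ⟨hs₁, hs_dom⟩ := hr₁.1 U hU hUk s hs
    obtain ⟨u, hu, rfl⟩ :=
      Finset.mem_image.mp (Finsupp.mapDomain_support (Finsupp.support_smul ht))
    have hs_fin : (pdom s).Finite := hs_dom ▸ hU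
    obtain ⟨hu₂, hu_dom⟩ := hr₂.1 (pim s) hs_fin.pim
      ((ncard_pim_le hs_fin).trans (hs_dom ▸ hUk)) u hu
    exact ⟨⟨s, hs₁, u, hu₂, hu_dom.ge, rfl⟩, (pdom_pcomp hu_dom.ge).trans hs_dom⟩
  · rw [restrictZ_compSection hr₁ hr₂ hU hUk, restrictZ_compSection hr₁ hr₂ hU' hU'k,
      hr₁.2 U U' hU hUk hU' hU'k]

lemma ZExt.pcomp {s : α → Option β} {u : β → Option γ} (hs : ZExt k S₁ s) (hu : ZExt k S₂ u)
    (hdom : pdom u = pim s) : ZExt k (compSet S₁ S₂) (pcomp u s) := by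
  obtain ⟨r₁, hr₁, hr₁s⟩ := hs
  obtain ⟨r₂, hr₂, hr₂u⟩ := hu
  refine ⟨compSection r₁ r₂, hr₁.compSection hr₂, ?_⟩
  rw [pdom_pcomp hdom.ge, compSection, hr₁s, Finsupp.linearCombination_single, one_smul,
    compAlong, ← hdom, hr₂u, Finsupp.mapDomain_single]

end Sections

theorem stmt9_general (σ : Sig) (A B C : Str σ) (k : ℕ)
    (hAB : cohomConsistent k A B) (hBC : cohomConsistent k B C) :
    cohomConsistent k A C := by
  obtain ⟨S₁, hne₁, hhom₁, hd₁, hf₁, hz₁⟩ := hAB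
  obtain ⟨S₂, hne₂, hhom₂, hd₂, hf₂, hz₂⟩ := hBC
  refine ⟨compSet S₁ S₂, compSet_nonempty hne₁ hne₂ hd₁ hd₂, compSet_subset_Homk hhom₁ hhom₂,
    hd₁.compSet, hf₁.compSet hd₂ (fun s hs => (hhom₁ hs).2.1) hf₂, fun t ht => ?_⟩
  obtain ⟨s, hs, u, hu, -, hdom, rfl⟩ := exists_pcomp_of_mem_compSet hd₂ ht
  exact (hz₁ s hs).pcomp (hz₂ u hu) hdom

/-- Cohomological k-consistency is transitive. -/
theorem stmt9 (σ : Sig) (A B C : Str σ)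
    [Fintype A.carrier] [Fintype B.carrier] [Fintype C.carrier] (k : ℕ)
    (hAB : cohomConsistent k A B) (hBC : cohomConsistent k B C) :
    cohomConsistent k A C :=
  stmt9_general σ A B C k hAB hBC
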